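/- In BiSample-MD with expected frequencies, f_POS − f_NEG = (2p−1)·s/n, where s = Σ_{i: v_i ≠ ⊥} v_i and p = e^ε/(e^ε+1). Hence s* = n·(f_POS − f_NEG)/(2p−1) is an unbiased estimator of the sum of truthfully provided values. -/
import Mathlib


open Real Finset

/-- Expected probability of reporting `b = 1` given direction `s` for a user
holding `t ∈ [−1,1] ∪ {⊥}` under BiSample-MD. -/
noncomputable def gMD (ε : ℝ) (s : Bool) (t : Option ℝ) : ℝ :=
  match t with
  | some v => if s then (exp ε - 1) / (exp ε + 1) * (v / 2) + 1 / 2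
              else (1 - exp ε) / (1 + exp ε) * (v / 2) + 1 / 2
  | none => 1 / (exp ε + 1)

lemma gMD_diff (ε : ℝ) (t : Option ℝ) :
    gMD ε true t - gMD ε false t = (exp ε - 1) / (exp ε + 1) * t.getD 0 := by
  have h1 : (0:ℝ) < exp ε + 1 := by positivity
  cases t with
  | none => simp [gMD]
  | some v =>
    simp only [gMD, Option.getD_some, if_true, Bool.false_eq_true, if_false]
    field_simp
    ring

/-- For BiSample-MD with expected frequencies, `f_POS − f_NEG = (2p−1)·s/n`
where `s = Σ_{v_i ≠ ⊥} v_i`; hence `s* = n·(f_POS − f_NEG)/(2p−1)` is an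
unbiased estimator of the sum of truthfully provided values. -/
theorem biSampleMD_sum_unbiased (ε : ℝ) (hε : 0 < ε)
    (n : ℕ) (hn : 0 < n) (hold : Fin n → Option ℝ)
    (hval : ∀ i, ∀ v ∈ hold i, v ∈ Set.Icc (-1 : ℝ) 1)
    (p fPOS fNEG s : ℝ)
    (hp : p = exp ε / (exp ε + 1))
    (hPOS : fPOS = (∑ i, gMD ε true (hold i)) / n)
    (hNEG : fNEG = (∑ i, gMD ε false (hold i)) / n)
    (hs : s = ∑ i, ((hold i).getD 0)) :
    fPOS - fNEG = (2 * p - 1) * s / n ∧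
    n * (fPOS - fNEG) / (2 * p - 1) = s := by
  have h1 : (0:ℝ) < exp ε + 1 := by positivity
  have hexp : 1 < exp ε := by
    rw [show (1:ℝ) = exp 0 by simp]; exact exp_lt_exp.mpr hε
  have hpval : 2 * p - 1 = (exp ε - 1) / (exp ε + 1) := by
    rw [hp]; field_simp; ring
  have hn' : (n:ℝ) ≠ 0 := Nat.cast_ne_zero.mpr hn.ne'
  have key : fPOS - fNEG = (2 * p - 1) * s / n := by
    rw [hPOS, hNEG, div_sub_div_same, ← Finset.sum_sub_distrib]
    rw [hpval, hs, Finset.mul_sum, ← Finset.sum_congr rfl (fun i _ => gMD_diff ε (hold i))]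
  refine ⟨key, ?_⟩
  have hne : 2 * p - 1 ≠ 0 := by
    rw [hpval]; exact div_ne_zero (by linarith) (by linarith)
  rw [key]
  field_simp
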